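/- arXiv:0905.3508 — 12 statements merged into one kernel-verified Lean document; each statement's English description precedes it below -/
import Mathlib

section
/- For any double posets E, F, G, the number of pictures from the composition EF to G equals the sum, over all decompositions (I,S) of G, of the product of the number of pictures from E to I and the number of pictures from F to S. Equivalently, there is a bijection between pictures α: EF → G and 4-tuples (φ, ψ, I, S) where (I,S) is a decomposition of G, φ is a picture from E to I, and ψ is a picture from F to S. -/
def compRel1 {E F : Type} (rE : E → E → Prop) (rF : F → F → Prop) :
    E ⊕ F → E ⊕ F → Prop
  | Sum.inl a, Sum.inl b => rE a b
  | Sum.inr a, Sum.inr b => rF a b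
  | _, _ => False

/-- Second order of the composition `EF`: all of `E` below all of `F`. -/
def compRel2 {E F : Type} (rE : E → E → Prop) (rF : F → F → Prop) :
    E ⊕ F → E ⊕ F → Prop
  | Sum.inl a, Sum.inl b => rE a b
  | Sum.inr a, Sum.inr b => rF a b
  | Sum.inl _, Sum.inr _ => True
  | Sum.inr _, Sum.inl _ => False

/-- A picture between double posets. -/
def IsPicture {E F : Type} (rE1 rE2 : E → E → Prop) (rF1 rF2 : F → F → Prop)
    (φ : E ≃ F) : Prop :=
  (∀ e e', rE1 e e' → rF2 (φ e) (φ e')) ∧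
  (∀ f f', rF1 f f' → rE2 (φ.symm f) (φ.symm f'))

/-- Restriction of a relation to a subset. -/
def resRel {α : Type} (r : α → α → Prop) (s : Set α) : s → s → Prop :=
  fun a b => r a b

/-!
A bijection `α : E ⊕ F ≃ G` is the same thing as a subset `I = α(E)` of `G` together with
bijections `φ : E ≃ I` and `ψ : F ≃ Iᶜ`. As `EF` has no `<₁`-comparabilities between `E` and
`F`, the first picture condition on `α` is the conjunction of those on `φ` and `ψ`. As all of
`E` lies `<₂`-below all of `F`, the second one says, besides the conditions on `φ` and `ψ`, only
that no element of `Iᶜ` is `<₁`-below an element of `I`, i.e. that `I` is an inferior ideal.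
-/

open Set

namespace Equiv

section SumCompl

variable {E F G : Type*}

open Classical in
noncomputable def sumOfCompl (I : Set G) (φ : E ≃ I) (ψ : F ≃ ↥Iᶜ) : E ⊕ F ≃ G :=
  (sumCongr φ ψ).trans (Equiv.sumCompl (· ∈ I))

@[simp]
theorem sumOfCompl_inl (I : Set G) (φ : E ≃ I) (ψ : F ≃ ↥Iᶜ) (e : E) :
    sumOfCompl I φ ψ (.inl e) = φ e := rfl

@[simp]
theorem sumOfCompl_inr (I : Set G) (φ : E ≃ I) (ψ : F ≃ ↥Iᶜ) (f : F) :
    sumOfCompl I φ ψ (.inr f) = ψ f := rfl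

theorem range_comp_inr_eq_compl (α : E ⊕ F ≃ G) :
    range (α ∘ Sum.inr) = (range (α ∘ Sum.inl))ᶜ := by
  rw [range_comp, range_comp, ← α.image_compl, compl_range_inl]

theorem sigmaSetCompl_ext {x y : Σ I : Set G, (E ≃ I) × (F ≃ ↥Iᶜ)}
    (hφ : ∀ e, (x.2.1 e : G) = y.2.1 e) (hψ : ∀ f, (x.2.2 f : G) = y.2.2 f) : x = y := by
  obtain ⟨I, φ, ψ⟩ := x
  obtain ⟨J, φ', ψ'⟩ := y
  obtain rfl : I = J := by
    simpa [range_comp, φ.surjective.range_eq, φ'.surjective.range_eq] using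
      congrArg range (funext hφ : ((↑) : I → G) ∘ φ = (↑) ∘ φ')
  obtain rfl : φ = φ' := Equiv.ext fun e => Subtype.ext (hφ e)
  obtain rfl : ψ = ψ' := Equiv.ext fun f => Subtype.ext (hψ f)
  rfl

noncomputable def sumEquivEquivSigmaCompl : (E ⊕ F ≃ G) ≃ Σ I : Set G, (E ≃ I) × (F ≃ ↥Iᶜ) where
  toFun α := ⟨range (α ∘ Sum.inl), ofInjective _ (α.injective.comp Sum.inl_injective),
    (ofInjective _ (α.injective.comp Sum.inr_injective)).trans
      (setCongr (range_comp_inr_eq_compl α))⟩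
  invFun x := sumOfCompl x.1 x.2.1 x.2.2
  left_inv α := by ext (_ | _) <;> rfl
  right_inv _ := sigmaSetCompl_ext (fun _ => rfl) (fun _ => rfl)

end SumCompl

def subtypeSigmaProdEquiv {α : Type*} {β γ : α → Type*} (p : α → Prop)
    (q : ∀ a, β a → Prop) (r : ∀ a, γ a → Prop) :
    {x : Σ a, β a × γ a // p x.1 ∧ q x.1 x.2.1 ∧ r x.1 x.2.2} ≃
      Σ a : Subtype p, Subtype (q a) × Subtype (r a) where
  toFun x := ⟨⟨x.1.1, x.2.1⟩, ⟨x.1.2.1, x.2.2.1⟩, ⟨x.1.2.2, x.2.2.2⟩⟩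
  invFun y := ⟨⟨y.1.1, y.2.1.1, y.2.2.1⟩, y.1.2, y.2.1.2, y.2.2.2⟩
  left_inv _ := rfl
  right_inv _ := rfl

end Equiv

section Pictures

variable {E F G : Type}

theorem isPicture_iff_forall {r₁ r₂ : E → E → Prop} {s₁ s₂ : F → F → Prop} {φ : E ≃ F} :
    IsPicture r₁ r₂ s₁ s₂ φ ↔
      (∀ e e', r₁ e e' → s₂ (φ e) (φ e')) ∧ ∀ e e', s₁ (φ e) (φ e') → r₂ e e' := by
  refine and_congr_right' ⟨fun h e e' hs => by simpa using h _ _ hs, fun h f f' hs => ?_⟩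
  exact h _ _ (by simpa using hs)

theorem mem_of_rel_mem_iff_forall_not_rel (r : G → G → Prop) (I : Set G) (φ : E ≃ I)
    (ψ : F ≃ ↥Iᶜ) : (∀ x y, y ∈ I → r x y → x ∈ I) ↔ ∀ f e, ¬ r (ψ f) (φ e) := by
  refine ⟨fun h f e hr => (ψ f).2 (h _ _ (φ e).2 hr), fun h x y hy hr => ?_⟩
  by_contra hx
  exact h (ψ.symm ⟨x, hx⟩) (φ.symm ⟨y, hy⟩) (by simpa using hr)

theorem isPicture_sumOfCompl_iff (rE₁ rE₂ : E → E → Prop) (rF₁ rF₂ : F → F → Prop)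
    (rG₁ rG₂ : G → G → Prop) (I : Set G) (φ : E ≃ I) (ψ : F ≃ ↥Iᶜ) :
    IsPicture (compRel1 rE₁ rF₁) (compRel2 rE₂ rF₂) rG₁ rG₂ (Equiv.sumOfCompl I φ ψ) ↔
      (∀ x y, y ∈ I → rG₁ x y → x ∈ I) ∧
        IsPicture rE₁ rE₂ (resRel rG₁ I) (resRel rG₂ I) φ ∧
        IsPicture rF₁ rF₂ (resRel rG₁ Iᶜ) (resRel rG₂ Iᶜ) ψ := by
  simp only [isPicture_iff_forall, mem_of_rel_mem_iff_forall_not_rel rG₁ I φ ψ, Sum.forall,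
    compRel1, compRel2, Equiv.sumOfCompl_inl, Equiv.sumOfCompl_inr, resRel, forall_and,
    false_imp_iff, imp_true_iff, imp_false, and_true, true_and]
  tauto

end Pictures

theorem pictures_from_composition_general
    {E F G : Type}
    (rE1 rE2 : E → E → Prop) (rF1 rF2 : F → F → Prop) (rG1 rG2 : G → G → Prop) :
    Nonempty
      ({α : (E ⊕ F) ≃ G //
          IsPicture (compRel1 rE1 rF1) (compRel2 rE2 rF2) rG1 rG2 α} ≃
        Σ I : {I : Set G // ∀ x y, y ∈ I → rG1 x y → x ∈ I},
          {φ : E ≃ ↥I.1 //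
              IsPicture rE1 rE2 (resRel rG1 I.1) (resRel rG2 I.1) φ} ×
          {ψ : F ≃ ↥(I.1ᶜ) //
              IsPicture rF1 rF2 (resRel rG1 I.1ᶜ) (resRel rG2 I.1ᶜ) ψ}) :=
  ⟨(Equiv.sumEquivEquivSigmaCompl.symm.subtypeEquiv fun x =>
      (isPicture_sumOfCompl_iff rE1 rE2 rF1 rF2 rG1 rG2 x.1 x.2.1 x.2.2).symm).symm.trans
    (Equiv.subtypeSigmaProdEquiv (fun I => ∀ x y, y ∈ I → rG1 x y → x ∈ I)
      (fun I => IsPicture rE1 rE2 (resRel rG1 I) (resRel rG2 I))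
      (fun I => IsPicture rF1 rF2 (resRel rG1 Iᶜ) (resRel rG2 Iᶜ)))⟩

/-- Pictures from the composition `EF` to `G` are in bijection with 4-tuples
`(φ, ψ, I, S)` where `(I, S)` is a decomposition of `G`, `φ` a picture from `E`
to `I` and `ψ` a picture from `F` to `S = Iᶜ`. -/
theorem pictures_from_composition
    {E F G : Type} [Fintype E] [Fintype F] [Fintype G]
    (rE1 rE2 : E → E → Prop) (rF1 rF2 : F → F → Prop) (rG1 rG2 : G → G → Prop)
    (hE1 : IsStrictOrder E rE1) (hE2 : IsStrictOrder E rE2)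
    (hF1 : IsStrictOrder F rF1) (hF2 : IsStrictOrder F rF2)
    (hG1 : IsStrictOrder G rG1) (hG2 : IsStrictOrder G rG2) :
    Nonempty
      ({α : (E ⊕ F) ≃ G //
          IsPicture (compRel1 rE1 rF1) (compRel2 rE2 rF2) rG1 rG2 α} ≃
        Σ I : {I : Set G // ∀ x y, y ∈ I → rG1 x y → x ∈ I},
          {φ : E ≃ ↥I.1 //
              IsPicture rE1 rE2 (resRel rG1 I.1) (resRel rG2 I.1) φ} ×
          {ψ : F ≃ ↥(I.1ᶜ) //
              IsPicture rF1 rF2 (resRel rG1 I.1ᶜ) (resRel rG2 I.1ᶜ) ψ}) :=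
  pictures_from_composition_general rE1 rE2 rF1 rF2 rG1 rG2
end

section
/- If α is a picture from the composition EF of double posets to a double poset G, then α(E) is an inferior ideal of (G,<₁) and α(F) is a superior ideal of (G,<₁). -/
/-! In the second order of `EF` nothing from `F` lies below an element of `E`, so the
inverse of a picture, being monotone from `(G, <₁)` to `(EF, <₂)`, cannot send an element
below `α(E)` into `F`, nor an element above `α(F)` into `E`. -/

section CompRel2

variable {E F : Type} {rE : E → E → Prop} {rF : F → F → Prop}

theorem Sum.isLeft_of_compRel2_inl {p : E ⊕ F} {e : E} (h : compRel2 rE rF p (Sum.inl e)) :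
    p.isLeft := by
  cases p with
  | inl _ => rfl
  | inr _ => exact h.elim

theorem Sum.isRight_of_compRel2_inr {p : E ⊕ F} {f : F} (h : compRel2 rE rF (Sum.inr f) p) :
    p.isRight := by
  cases p with
  | inl _ => exact h.elim
  | inr _ => rfl

end CompRel2

section ComonotoneEquiv

variable {E F G : Type} {rE : E → E → Prop} {rF : F → F → Prop} {r : G → G → Prop}
  {α : E ⊕ F ≃ G}

theorem Equiv.mem_range_inl_of_rel_of_compRel2
    (hα : ∀ x y, r x y → compRel2 rE rF (α.symm x) (α.symm y)) {x y : G}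
    (hy : y ∈ Set.range (fun e : E => α (Sum.inl e))) (hxy : r x y) :
    x ∈ Set.range (fun e : E => α (Sum.inl e)) := by
  obtain ⟨e, rfl⟩ := hy
  have hx : compRel2 rE rF (α.symm x) (Sum.inl e) := by
    simpa only [Equiv.symm_apply_apply] using hα x _ hxy
  obtain ⟨e', he'⟩ := Sum.isLeft_iff.mp (Sum.isLeft_of_compRel2_inl hx)
  exact ⟨e', (α.symm_apply_eq.mp he').symm⟩

theorem Equiv.mem_range_inr_of_rel_of_compRel2
    (hα : ∀ x y, r x y → compRel2 rE rF (α.symm x) (α.symm y)) {x y : G}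
    (hx : x ∈ Set.range (fun f : F => α (Sum.inr f))) (hxy : r x y) :
    y ∈ Set.range (fun f : F => α (Sum.inr f)) := by
  obtain ⟨f, rfl⟩ := hx
  have hy : compRel2 rE rF (Sum.inr f) (α.symm y) := by
    simpa only [Equiv.symm_apply_apply] using hα _ y hxy
  obtain ⟨f', hf'⟩ := Sum.isRight_iff.mp (Sum.isRight_of_compRel2_inr hy)
  exact ⟨f', (α.symm_apply_eq.mp hf').symm⟩

end ComonotoneEquiv

theorem picture_image_is_ideal_general
    {E F G : Type}
    (rE1 rE2 : E → E → Prop) (rF1 rF2 : F → F → Prop) (rG1 rG2 : G → G → Prop)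
    (α : (E ⊕ F) ≃ G)
    (hα : IsPicture (compRel1 rE1 rF1) (compRel2 rE2 rF2) rG1 rG2 α) :
    (∀ x y, y ∈ Set.range (fun e : E => α (Sum.inl e)) → rG1 x y →
      x ∈ Set.range (fun e : E => α (Sum.inl e))) ∧
    (∀ x y, x ∈ Set.range (fun f : F => α (Sum.inr f)) → rG1 x y →
      y ∈ Set.range (fun f : F => α (Sum.inr f))) :=
  ⟨fun _ _ => Equiv.mem_range_inl_of_rel_of_compRel2 hα.2,
    fun _ _ => Equiv.mem_range_inr_of_rel_of_compRel2 hα.2⟩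

/-- If `α` is a picture from `EF` to `G` then `α(E)` is an inferior ideal of
`(G, <₁)` and `α(F)` is a superior ideal of `(G, <₁)`. -/
theorem picture_image_is_ideal
    {E F G : Type} [Fintype E] [Fintype F] [Fintype G]
    (rE1 rE2 : E → E → Prop) (rF1 rF2 : F → F → Prop) (rG1 rG2 : G → G → Prop)
    (hE1 : IsStrictOrder E rE1) (hE2 : IsStrictOrder E rE2)
    (hF1 : IsStrictOrder F rF1) (hF2 : IsStrictOrder F rF2)
    (hG1 : IsStrictOrder G rG1) (hG2 : IsStrictOrder G rG2)
    (α : (E ⊕ F) ≃ G)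
    (hα : IsPicture (compRel1 rE1 rF1) (compRel2 rE2 rF2) rG1 rG2 α) :
    (∀ x y, y ∈ Set.range (fun e : E => α (Sum.inl e)) → rG1 x y →
      x ∈ Set.range (fun e : E => α (Sum.inl e))) ∧
    (∀ x y, x ∈ Set.range (fun f : F => α (Sum.inr f)) → rG1 x y →
      y ∈ Set.range (fun f : F => α (Sum.inr f))) :=
  picture_image_is_ideal_general rE1 rE2 rF1 rF2 rG1 rG2 α hα
end

section
/- For permutations σ ∈ Sₙ and τ ∈ Sₙ, the internal product of the associated double posets satisfies P_σ ∘ P_τ = P_{σ∘τ}. Here the internal product of double posets E and F is the sum (in the free ℤ-module on double posets) over all increasing bijections φ: (E,<₁) → (F,<₂) of the double poset E ×_φ F; for permutation double posets there is exactly one such φ and the resulting double poset is P_{σ∘τ}. -/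
/-- First order of the double poset `P_σ`: `σ(1) <₁ σ(2) <₁ ... <₁ σ(n)`
(the second order being the natural order of `Fin n`). -/
def permRel1 {n : ℕ} (σ : Equiv.Perm (Fin n)) (a b : Fin n) : Prop :=
  σ.symm a < σ.symm b

/-!
A strictly monotone permutation of a finite chain is the identity, so the only increasing
bijection `(P_σ, <₁) → (P_τ, <₂)` is `σ⁻¹`; pulling the first order of `P_τ` back along `σ⁻¹`
gives exactly the first order of `P_{σ∘τ}`.
-/

open Equiv

theorem Equiv.Perm.eq_one_of_strictMono {α : Type*} [LinearOrder α] [WellFoundedLT α]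
    {e : Perm α} (he : StrictMono e) : e = 1 := by
  have : he.orderIsoOfSurjective e e.surjective = OrderIso.refl α := Subsingleton.elim _ _
  ext x
  exact congrArg (· x) (congrArg DFunLike.coe this)

theorem eq_symm_of_permRel1_imp_lt {n : ℕ} {σ φ : Perm (Fin n)}
    (h : ∀ a b : Fin n, permRel1 σ a b → φ a < φ b) : φ = σ.symm := by
  have hmono : StrictMono (φ * σ) := fun i j hij => h _ _ (by simpa [permRel1] using hij)
  exact mul_eq_one_iff_eq_inv.mp (Perm.eq_one_of_strictMono hmono)

/-- `P_σ ∘ P_τ = P_{σ∘τ}`: there is exactly one increasing bijection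
`φ : (P_σ, <₁) → (P_τ, <₂)`, and for it the twisted double poset
`P_σ ×_φ P_τ` (realized on the common underlying set, with first order
pulled back along `φ` from the first order of `P_τ` and second order the
natural one) is the double poset `P_{σ∘τ}`. -/
theorem perm_internal_product {n : ℕ} (σ τ : Equiv.Perm (Fin n)) :
    (∃! φ : Equiv.Perm (Fin n), ∀ a b : Fin n, permRel1 σ a b → φ a < φ b) ∧
    (∀ φ : Equiv.Perm (Fin n), (∀ a b : Fin n, permRel1 σ a b → φ a < φ b) →
      ∀ a b : Fin n, permRel1 τ (φ a) (φ b) ↔ permRel1 (σ * τ) a b) := by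
  refine ⟨⟨σ.symm, fun _ _ h => h, fun _ => eq_symm_of_permRel1_imp_lt⟩, ?_⟩
  intro φ h a b
  rw [eq_symm_of_permRel1_imp_lt h]
  rfl
end

section
/- Let E, F, G be double posets. There is a bijection between (i) pairs (φ, α) where φ: (E,<₁) → (F,<₂) is an increasing bijection and α is a picture from E ×_φ F to G, and (ii) pairs (ψ, β) where ψ: (F,<₁) → (G,<₂) is an increasing bijection and β is a picture from E to F ×_ψ G. The bijection is given by ψ = α∘(φ⁻¹, id) and β = (id, ψ)∘φ, with inverse φ = p₁∘β and α = ψ∘p₂. -/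
/-!
Write `α = φ.trans ψ`, so that `ψ = α ∘ φ⁻¹` and `β = φ`. Transporting along `φ`, a picture
`α : E ×_φ F → G` amounts to `ψ` being increasing from `<₁` to `<₂` together with the implication
`ψ f <₁ ψ f' → φ⁻¹ f <₂ φ⁻¹ f'`, and the latter is the second half of `φ` being a picture
`E → F ×_ψ G`, whose first half is `φ` being increasing. Both sides are therefore the same three
conditions on `(φ, ψ)`.
-/

section

variable {E F G : Type}

def Equiv.prodTransEquiv : (F ≃ G) × (E ≃ F) ≃ (E ≃ F) × (E ≃ G) where
  toFun q := (q.2, q.2.trans q.1)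
  invFun p := (p.1.symm.trans p.2, p.1)
  left_inv q := by ext <;> simp
  right_inv p := by ext <;> simp

theorem isPicture_preimage_trans_iff {rE2 : E → E → Prop} {rF1 : F → F → Prop}
    {rG1 rG2 : G → G → Prop} (φ : E ≃ F) (ψ : F ≃ G) :
    IsPicture (φ ⁻¹'o rF1) rE2 rG1 rG2 (φ.trans ψ) ↔
      (∀ f f', rF1 f f' → rG2 (ψ f) (ψ f')) ∧
      ∀ f f', rG1 (ψ f) (ψ f') → rE2 (φ.symm f) (φ.symm f') := by
  refine and_congr (Equiv.forall₂_congr φ φ Iff.rfl) (Equiv.forall₂_congr' ψ ψ ?_).symm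
  simp

end

/-- The double poset `E ×_φ F` is realized on `E`, with first order pulled back along `φ` from the
first order of `F` and second order that of `E`; similarly `F ×_ψ G` on `F`. -/
theorem internal_product_picture_bijection_general
    {E F G : Type}
    (rE1 rE2 : E → E → Prop) (rF1 rF2 : F → F → Prop) (rG1 rG2 : G → G → Prop) :
    Set.BijOn
      (fun p : (E ≃ F) × (E ≃ G) => (p.1.symm.trans p.2, p.1))
      {p : (E ≃ F) × (E ≃ G) |
        (∀ e e', rE1 e e' → rF2 (p.1 e) (p.1 e')) ∧
        IsPicture (fun e e' => rF1 (p.1 e) (p.1 e')) rE2 rG1 rG2 p.2}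
      {q : (F ≃ G) × (E ≃ F) |
        (∀ f f', rF1 f f' → rG2 (q.1 f) (q.1 f')) ∧
        IsPicture rE1 rE2 (fun f f' => rG1 (q.1 f) (q.1 f')) rF2 q.2} := by
  refine Equiv.bijOn_symm.mpr (Equiv.prodTransEquiv.bijOn fun ⟨ψ, φ⟩ => ?_)
  change (_ ∧ IsPicture (φ ⁻¹'o rF1) rE2 rG1 rG2 (φ.trans ψ)) ↔ _ ∧ _ ∧ _
  rw [isPicture_preimage_trans_iff]
  exact and_left_comm

/-- The bijection `(φ, α) ↦ (ψ, β) = (α∘(φ⁻¹,id), (id,ψ)∘φ)` between pairs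
where `φ : (E,<₁) → (F,<₂)` is an increasing bijection and `α` a picture from
`E ×_φ F` to `G`, and pairs where `ψ : (F,<₁) → (G,<₂)` is an increasing
bijection and `β` a picture from `E` to `F ×_ψ G`.  The double poset
`E ×_φ F` is realized on `E` (first order pulled back along `φ` from the first
order of `F`, second order that of `E`); similarly `F ×_ψ G` on `F`. -/
theorem internal_product_picture_bijection
    {E F G : Type} [Fintype E] [Fintype F] [Fintype G]
    (rE1 rE2 : E → E → Prop) (rF1 rF2 : F → F → Prop) (rG1 rG2 : G → G → Prop)
    (hE1 : IsStrictOrder E rE1) (hE2 : IsStrictOrder E rE2)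
    (hF1 : IsStrictOrder F rF1) (hF2 : IsStrictOrder F rF2)
    (hG1 : IsStrictOrder G rG1) (hG2 : IsStrictOrder G rG2) :
    Set.BijOn
      (fun p : (E ≃ F) × (E ≃ G) => (p.1.symm.trans p.2, p.1))
      {p : (E ≃ F) × (E ≃ G) |
        (∀ e e', rE1 e e' → rF2 (p.1 e) (p.1 e')) ∧
        IsPicture (fun e e' => rF1 (p.1 e) (p.1 e')) rE2 rG1 rG2 p.2}
      {q : (F ≃ G) × (E ≃ F) |
        (∀ f f', rF1 f f' → rG2 (q.1 f) (q.1 f')) ∧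
        IsPicture rE1 rE2 (fun f f' => rG1 (q.1 f) (q.1 f')) rF2 q.2} :=
  internal_product_picture_bijection_general rE1 rE2 rF1 rF2 rG1 rG2
end

section
/- The internal product of double posets is compatible with the Zelevinsky pairing: for any double posets E, F, G, the number of pairs (φ, α) with φ an increasing bijection (E,<₁) → (F,<₂) and α a picture from E ×_φ F to G equals the number of pairs (ψ, β) with ψ an increasing bijection (F,<₁) → (G,<₂) and β a picture from E to F ×_ψ G. In other words, ⟨E ∘ F, G⟩ = ⟨E, F ∘ G⟩. -/
section Twist

variable {E F G : Type}

def twistEquiv : (E ≃ F) × (E ≃ G) ≃ (F ≃ G) × (E ≃ F) where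
  toFun p := (p.1.symm.trans p.2, p.1)
  invFun q := (q.2, q.2.trans q.1)
  left_inv p := by ext <;> simp
  right_inv q := by ext <;> simp

theorem forall_rel_symm_trans_iff (r : F → F → Prop) (s : G → G → Prop) (φ : E ≃ F)
    (α : E ≃ G) :
    (∀ f f', r f f' → s ((φ.symm.trans α) f) ((φ.symm.trans α) f')) ↔
      ∀ e e', r (φ e) (φ e') → s (α e) (α e') := by
  simp [φ.forall_congr_left]

theorem forall_rel_symm_trans_symm_iff (r : G → G → Prop) (s : E → E → Prop) (φ : E ≃ F)
    (α : E ≃ G) :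
    (∀ f f', r ((φ.symm.trans α) f) ((φ.symm.trans α) f') → s (φ.symm f) (φ.symm f')) ↔
      ∀ g g', r g g' → s (α.symm g) (α.symm g') := by
  simp [(φ.symm.trans α).forall_congr_left]

theorem monotone_and_isPicture_iff_twist (rE1 rE2 : E → E → Prop) (rF1 rF2 : F → F → Prop)
    (rG1 rG2 : G → G → Prop) (φ : E ≃ F) (α : E ≃ G) :
    ((∀ e e', rE1 e e' → rF2 (φ e) (φ e')) ∧
        IsPicture (fun e e' => rF1 (φ e) (φ e')) rE2 rG1 rG2 α) ↔
      (∀ f f', rF1 f f' → rG2 ((φ.symm.trans α) f) ((φ.symm.trans α) f')) ∧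
        IsPicture rE1 rE2 (fun f f' => rG1 ((φ.symm.trans α) f) ((φ.symm.trans α) f')) rF2 φ := by
  rw [IsPicture, IsPicture, forall_rel_symm_trans_iff, forall_rel_symm_trans_symm_iff,
    and_left_comm]

end Twist

theorem internal_product_compatible_with_pairing_general
    {E F G : Type}
    (rE1 rE2 : E → E → Prop) (rF1 rF2 : F → F → Prop) (rG1 rG2 : G → G → Prop) :
    Nat.card {p : (E ≃ F) × (E ≃ G) //
        (∀ e e', rE1 e e' → rF2 (p.1 e) (p.1 e')) ∧
        IsPicture (fun e e' => rF1 (p.1 e) (p.1 e')) rE2 rG1 rG2 p.2} =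
    Nat.card {q : (F ≃ G) × (E ≃ F) //
        (∀ f f', rF1 f f' → rG2 (q.1 f) (q.1 f')) ∧
        IsPicture rE1 rE2 (fun f f' => rG1 (q.1 f) (q.1 f')) rF2 q.2} :=
  Nat.card_congr <| twistEquiv.subtypeEquiv fun p =>
    monotone_and_isPicture_iff_twist rE1 rE2 rF1 rF2 rG1 rG2 p.1 p.2

/-- Compatibility of the internal product with the Zelevinsky pairing:
`⟨E ∘ F, G⟩ = ⟨E, F ∘ G⟩`, i.e. the number of pairs `(φ, α)` with
`φ : (E,<₁) → (F,<₂)` increasing and `α` a picture from `E ×_φ F` to `G`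
equals the number of pairs `(ψ, β)` with `ψ : (F,<₁) → (G,<₂)` increasing and
`β` a picture from `E` to `F ×_ψ G` (the twisted double posets being realized
on `E` resp. `F`). -/
theorem internal_product_compatible_with_pairing
    {E F G : Type} [Fintype E] [Fintype F] [Fintype G]
    (rE1 rE2 : E → E → Prop) (rF1 rF2 : F → F → Prop) (rG1 rG2 : G → G → Prop)
    (hE1 : IsStrictOrder E rE1) (hE2 : IsStrictOrder E rE2)
    (hF1 : IsStrictOrder F rF1) (hF2 : IsStrictOrder F rF2)
    (hG1 : IsStrictOrder G rG1) (hG2 : IsStrictOrder G rG2) :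
    Nat.card {p : (E ≃ F) × (E ≃ G) //
        (∀ e e', rE1 e e' → rF2 (p.1 e) (p.1 e')) ∧
        IsPicture (fun e e' => rF1 (p.1 e) (p.1 e')) rE2 rG1 rG2 p.2} =
    Nat.card {q : (F ≃ G) × (E ≃ F) //
        (∀ f f', rF1 f f' → rG2 (q.1 f) (q.1 f')) ∧
        IsPicture rE1 rE2 (fun f f' => rG1 (q.1 f) (q.1 f')) rF2 q.2} :=
  internal_product_compatible_with_pairing_general rE1 rE2 rF1 rF2 rG1 rG2
end

section
/- Let π = (E,<₁,<₂) be a special double poset on {1,...,n} with <₂ the natural order. The map (σ,u,v) ↦ (I, S, st(u), st(v)) — where σ is a linear extension of (E,<₁), σ = uv is a factorization of the word σ, I is the set of digits in u, and S the set of digits in v — is a bijection from the set of such triples to the set of quadruples (I, S, α, β) with I an inferior ideal of (E,<₁), S its complement, and α, β linear extensions of (I,<₁) and (S,<₁) respectively. -/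
/-!
Cutting a linear extension `σ` after its first `m` letters, `σ = uv`, the letters of `u` form
an inferior ideal `I`: an element below a letter of `u` comes earlier in `σ`. Read through the
rank numberings of `I` and `Iᶜ`, the words `u` and `v` are linear extensions of `I` and `Iᶜ`.
Conversely, the concatenation of linear extensions of an ideal `I` and of `Iᶜ` is a linear
extension of `E`, since no element of `Iᶜ` lies below an element of `I`. The two constructions
are mutually inverse because `I` is recovered as the set of the first `|I|` letters.
-/

/-- `σ` is a linear extension of the special double poset `({1,...,n}, r, <nat)`
iff `σ⁻¹` is increasing from `r` to the natural order. -/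
def LinExt {n : ℕ} (r : Fin n → Fin n → Prop) (σ : Equiv.Perm (Fin n)) : Prop :=
  ∀ a b, r a b → σ.symm a < σ.symm b

open Finset Function Equiv

section Words

variable {ι κ α : Type*} {r : α → α → Prop}

def IsLinExtWord [LT ι] (r : α → α → Prop) (w : ι → α) : Prop :=
  ∀ i j, r (w i) (w j) → i < j

def IsInferiorIdeal (r : α → α → Prop) (s : Finset α) : Prop :=
  ∀ x y, y ∈ s → r x y → x ∈ s

lemma IsLinExtWord.comp_strictMono [LinearOrder ι] [LinearOrder κ] {w : ι → α}
    (hw : IsLinExtWord r w) {f : κ → ι} (hf : StrictMono f) : IsLinExtWord r (w ∘ f) :=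
  fun _ _ hij => hf.lt_iff_lt.mp (hw _ _ hij)

lemma IsLinExtWord.append {m k : ℕ} {u : Fin m → α} {v : Fin k → α}
    (hu : IsLinExtWord r u) (hv : IsLinExtWord r v) (hvu : ∀ i j, ¬ r (v i) (u j)) :
    IsLinExtWord r (Fin.append u v) := by
  intro x y
  refine Fin.addCases (fun i => ?_) (fun i => ?_) x <;>
    refine Fin.addCases (fun j => ?_) (fun j => ?_) y <;>
    simp only [Fin.append_left, Fin.append_right]
  · exact fun h => (Fin.strictMono_castAdd k).lt_iff_lt.mpr (hu i j h)
  · exact fun _ => Fin.lt_def.mpr (by simp only [Fin.val_castAdd, Fin.val_natAdd]; omega)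
  · exact fun h => absurd h (hvu i j)
  · exact fun h => (Fin.strictMono_natAdd m).lt_iff_lt.mpr (hv i j h)

lemma linExt_iff_isLinExtWord {n : ℕ} {r : Fin n → Fin n → Prop} {σ : Perm (Fin n)} :
    LinExt r σ ↔ IsLinExtWord r σ :=
  ⟨fun h i j hij => by simpa using h _ _ hij, fun h a b hab => h _ _ (by simpa using hab)⟩

end Words

section LinExtOn

variable {α : Type*} [LinearOrder α]

/-- `π` is a linear extension of `(s, r)`, the elements of `s` being numbered by rank. -/
def LinExtOn (r : α → α → Prop) (s : Finset α) (π : Perm (Fin s.card)) : Prop :=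
  ∀ i j, r (s.orderIsoOfFin rfl i) (s.orderIsoOfFin rfl j) → π.symm i < π.symm j

def permWord (s : Finset α) (π : Perm (Fin s.card)) (i : Fin s.card) : α :=
  s.orderIsoOfFin rfl (π i)

variable {r : α → α → Prop} {s : Finset α}

lemma permWord_mem (π : Perm (Fin s.card)) (i : Fin s.card) : permWord s π i ∈ s :=
  coe_mem _

lemma permWord_injective (π : Perm (Fin s.card)) : Injective (permWord s π) :=
  fun _ _ h => π.injective ((s.orderIsoOfFin rfl).injective (Subtype.coe_injective h))

lemma permWord_inj {π π' : Perm (Fin s.card)} (h : permWord s π = permWord s π') : π = π' :=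
  Equiv.ext fun i => (s.orderIsoOfFin rfl).injective (Subtype.coe_injective (congrFun h i))

lemma linExtOn_iff_isLinExtWord {π : Perm (Fin s.card)} :
    LinExtOn r s π ↔ IsLinExtWord r (permWord s π) :=
  ⟨fun h i j hij => by simpa using h _ _ hij,
    fun h a b hab => h _ _ (by simpa [permWord] using hab)⟩

/-- The standardization `st(w)`: the letter `w i` is replaced by its rank in `s`. -/
noncomputable def stdPerm (s : Finset α) (w : Fin s.card → α) (hw : ∀ i, w i ∈ s)
    (hinj : Injective w) : Perm (Fin s.card) :=
  Equiv.ofBijective (fun i => (s.orderIsoOfFin rfl).symm ⟨w i, hw i⟩)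
    (Finite.injective_iff_bijective.mp fun i j hij => hinj (by simpa using hij))

variable {w : Fin s.card → α} {hw : ∀ i, w i ∈ s} {hinj : Injective w}

lemma orderIsoOfFin_stdPerm (i : Fin s.card) :
    (s.orderIsoOfFin rfl (stdPerm s w hw hinj i) : α) = w i := by
  simp [stdPerm]

lemma permWord_stdPerm : permWord s (stdPerm s w hw hinj) = w :=
  funext orderIsoOfFin_stdPerm

lemma linExtOn_stdPerm (h : IsLinExtWord r w) : LinExtOn r s (stdPerm s w hw hinj) :=
  linExtOn_iff_isLinExtWord.mpr (by rwa [permWord_stdPerm])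

end LinExtOn

section Concat

variable {n : ℕ} (I : Finset (Fin n)) {β : Type*}

lemma Finset.card_add_card_compl_fin : I.card + Iᶜ.card = n :=
  (card_add_card_compl I).trans (Fintype.card_fin n)

-- Only the sizes of `I` and `Iᶜ` enter: words of length `n` are cut after `I.card` letters.
def concatWord (u : Fin I.card → β) (v : Fin Iᶜ.card → β) : Fin n → β :=
  Fin.append u v ∘ Fin.cast I.card_add_card_compl_fin.symm

def leftWord (w : Fin n → β) : Fin I.card → β :=
  w ∘ Fin.cast I.card_add_card_compl_fin ∘ Fin.castAdd Iᶜ.card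

def rightWord (w : Fin n → β) : Fin Iᶜ.card → β :=
  w ∘ Fin.cast I.card_add_card_compl_fin ∘ Fin.natAdd I.card

variable {I}

lemma concatWord_leftWord_rightWord (w : Fin n → β) :
    concatWord I (leftWord I w) (rightWord I w) = w := by
  ext x
  exact (congrFun (Fin.append_castAdd_natAdd (f := w ∘ Fin.cast I.card_add_card_compl_fin))
    (Fin.cast I.card_add_card_compl_fin.symm x)).trans (congrArg w (Fin.cast_eq_self x))

lemma leftWord_concatWord (u : Fin I.card → β) (v : Fin Iᶜ.card → β) :
    leftWord I (concatWord I u v) = u := by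
  ext i
  simp [leftWord, concatWord]

lemma rightWord_concatWord (u : Fin I.card → β) (v : Fin Iᶜ.card → β) :
    rightWord I (concatWord I u v) = v := by
  ext j
  simp [rightWord, concatWord]

lemma concatWord_injective {u : Fin I.card → β} {v : Fin Iᶜ.card → β} (hu : Injective u)
    (hv : Injective v) (huv : ∀ i j, u i ≠ v j) : Injective (concatWord I u v) :=
  (Fin.append_injective_iff.mpr ⟨hu, hv, huv⟩).comp (Fin.cast_injective _)

lemma leftWord_injective {w : Fin n → β} (hw : Injective w) : Injective (leftWord I w) :=
  hw.comp ((Fin.cast_injective _).comp (Fin.castAdd_injective _ _))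

lemma rightWord_injective {w : Fin n → β} (hw : Injective w) : Injective (rightWord I w) :=
  hw.comp ((Fin.cast_injective _).comp (Fin.natAdd_injective _ _))

lemma concatWord_mem_iff {u : Fin I.card → Fin n} {v : Fin Iᶜ.card → Fin n}
    (hu : ∀ i, u i ∈ I) (hv : ∀ j, v j ∉ I) (x : Fin n) :
    concatWord I u v x ∈ I ↔ (x : ℕ) < I.card := by
  obtain ⟨y, rfl⟩ := (finCongr I.card_add_card_compl_fin).surjective x
  refine Fin.addCases (fun i => ?_) (fun j => ?_) y
  · simpa [concatWord] using hu i
  · simpa [concatWord] using hv j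

variable {r : β → β → Prop}

lemma IsLinExtWord.concatWord {u : Fin I.card → β} {v : Fin Iᶜ.card → β}
    (hu : IsLinExtWord r u) (hv : IsLinExtWord r v) (hvu : ∀ i j, ¬ r (v i) (u j)) :
    IsLinExtWord r (concatWord I u v) :=
  (hu.append hv hvu).comp_strictMono (Fin.cast_strictMono _)

lemma IsLinExtWord.leftWord {w : Fin n → β} (hw : IsLinExtWord r w) :
    IsLinExtWord r (leftWord I w) :=
  hw.comp_strictMono ((Fin.cast_strictMono _).comp (Fin.strictMono_castAdd _))

lemma IsLinExtWord.rightWord {w : Fin n → β} (hw : IsLinExtWord r w) :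
    IsLinExtWord r (rightWord I w) :=
  hw.comp_strictMono ((Fin.cast_strictMono _).comp (Fin.strictMono_natAdd _))

end Concat

section Decomposition

variable {n : ℕ} {r : Fin n → Fin n → Prop} {σ : Perm (Fin n)} {m : ℕ}

abbrev SubsetPerms (n : ℕ) := Σ I : Finset (Fin n), Perm (Fin I.card) × Perm (Fin Iᶜ.card)

def prefixSet (σ : Perm (Fin n)) (m : ℕ) : Finset (Fin n) :=
  (univ.filter fun j : Fin n => (j : ℕ) < m).image σ

lemma mem_prefixSet {x : Fin n} : x ∈ prefixSet σ m ↔ (σ.symm x : ℕ) < m := by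
  simp [prefixSet, ← Equiv.eq_symm_apply]

lemma card_prefixSet (hm : m ≤ n) : (prefixSet σ m).card = m := by
  rw [prefixSet, card_image_of_injective _ σ.injective, Fin.card_filter_val_lt, min_eq_right hm]

lemma isInferiorIdeal_prefixSet (hσ : LinExt r σ) :
    IsInferiorIdeal r (prefixSet σ m) := fun x y hy hxy => by
  rw [mem_prefixSet] at hy ⊢
  exact (Fin.lt_def.mp (hσ x y hxy)).trans hy

lemma leftWord_prefixSet_mem (hm : m ≤ n) (i : Fin (prefixSet σ m).card) :
    leftWord (prefixSet σ m) σ i ∈ prefixSet σ m := by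
  simpa [leftWord, mem_prefixSet, card_prefixSet hm] using i.2

lemma rightWord_prefixSet_mem (hm : m ≤ n) (j : Fin (prefixSet σ m)ᶜ.card) :
    rightWord (prefixSet σ m) σ j ∈ (prefixSet σ m)ᶜ := by
  simp [rightWord, mem_prefixSet, card_prefixSet hm]

noncomputable def splitPerm (σ : Perm (Fin n)) (m : ℕ) (hm : m ≤ n) : SubsetPerms n :=
  ⟨prefixSet σ m,
    stdPerm _ _ (leftWord_prefixSet_mem hm) (leftWord_injective σ.injective),
    stdPerm _ _ (rightWord_prefixSet_mem hm) (rightWord_injective σ.injective)⟩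

noncomputable def concatPerm (q : SubsetPerms n) : Perm (Fin n) :=
  Equiv.ofBijective (concatWord q.1 (permWord q.1 q.2.1) (permWord q.1ᶜ q.2.2))
    (Finite.injective_iff_bijective.mp <|
      concatWord_injective (permWord_injective _) (permWord_injective _) fun i j h =>
        mem_compl.mp (permWord_mem q.2.2 j) (h ▸ permWord_mem q.2.1 i))

lemma concatPerm_splitPerm (hm : m ≤ n) :
    concatPerm (splitPerm σ m hm) = σ :=
  Equiv.coe_inj.mp <| by
    simp only [concatPerm, splitPerm, coe_ofBijective]
    rw [permWord_stdPerm, permWord_stdPerm, concatWord_leftWord_rightWord]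

lemma prefixSet_concatPerm (q : SubsetPerms n) :
    prefixSet (concatPerm q) q.1.card = q.1 := by
  ext x
  rw [mem_prefixSet, ← concatWord_mem_iff (permWord_mem q.2.1)
    (fun j => mem_compl.mp (permWord_mem q.2.2 j))]
  exact iff_of_eq (congrArg (· ∈ q.1) (Equiv.ofBijective_apply_symm_apply _ _ x))

lemma concatPerm_injective {q q' : SubsetPerms n}
    (h : concatPerm q = concatPerm q') (hcard : q.1.card = q'.1.card) : q = q' := by
  obtain ⟨I, α, β⟩ := q
  obtain ⟨I', α', β'⟩ := q'
  obtain rfl : I = I' := by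
    have hI := prefixSet_concatPerm ⟨I, α, β⟩
    dsimp only at hcard hI
    rw [h, hcard] at hI
    exact hI.symm.trans (prefixSet_concatPerm _)
  have hw := congrArg DFunLike.coe h
  simp only [concatPerm, coe_ofBijective] at hw
  obtain rfl : α = α' :=
    permWord_inj (by simpa only [leftWord_concatWord] using congrArg (leftWord I) hw)
  obtain rfl : β = β' :=
    permWord_inj (by simpa only [rightWord_concatWord] using congrArg (rightWord I) hw)
  rfl

lemma linExt_concatPerm {q : SubsetPerms n}
    (hI : IsInferiorIdeal r q.1) (hα : LinExtOn r q.1 q.2.1) (hβ : LinExtOn r q.1ᶜ q.2.2) :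
    LinExt r (concatPerm q) :=
  linExt_iff_isLinExtWord.mpr <|
    (linExtOn_iff_isLinExtWord.mp hα).concatWord (linExtOn_iff_isLinExtWord.mp hβ)
      fun i j h => mem_compl.mp (permWord_mem q.2.2 i) (hI _ _ (permWord_mem q.2.1 j) h)

end Decomposition

section Bijection

variable {n : ℕ} (r : Fin n → Fin n → Prop)

abbrev FactoredLinExt := {p : Perm (Fin n) × ℕ // LinExt r p.1 ∧ p.2 ≤ n}

abbrev IdealLinExt := {q : SubsetPerms n //
    IsInferiorIdeal r q.1 ∧ LinExtOn r q.1 q.2.1 ∧ LinExtOn r q.1ᶜ q.2.2}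

noncomputable def decompose (p : FactoredLinExt r) : IdealLinExt r :=
  ⟨splitPerm p.1.1 p.1.2 p.2.2, isInferiorIdeal_prefixSet p.2.1,
    linExtOn_stdPerm (hinj := leftWord_injective p.1.1.injective)
      (linExt_iff_isLinExtWord.mp p.2.1).leftWord,
    linExtOn_stdPerm (hinj := rightWord_injective p.1.1.injective)
      (linExt_iff_isLinExtWord.mp p.2.1).rightWord⟩

noncomputable def recompose (q : IdealLinExt r) : FactoredLinExt r :=
  ⟨(concatPerm q.1, q.1.1.card), linExt_concatPerm q.2.1 q.2.2.1 q.2.2.2,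
    (card_le_univ _).trans_eq (Fintype.card_fin n)⟩

lemma recompose_decompose : LeftInverse (recompose r) (decompose r) := fun p =>
  Subtype.ext (Prod.ext (concatPerm_splitPerm p.2.2) (card_prefixSet p.2.2))

lemma recompose_injective : Injective (recompose r) := fun _ _ h =>
  Subtype.ext (concatPerm_injective (congrArg (·.1.1) h) (congrArg (·.1.2) h))

noncomputable def decomposeEquiv : FactoredLinExt r ≃ IdealLinExt r where
  toFun := decompose r
  invFun := recompose r
  left_inv := recompose_decompose r
  right_inv := (recompose_decompose r).rightInverse_of_injective (recompose_injective r)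

end Bijection

/-- The factorization `σ = uv` is encoded by the length `p.2` of `u`; `st(u) i` is the rank
in `I` of the `i`-th letter of `u`, and similarly for `v` and `Iᶜ`. -/
theorem linear_extension_decomposition_bijection_general
    {n : ℕ} (r1 : Fin n → Fin n → Prop) :
    ∃ b :
      {p : Equiv.Perm (Fin n) × ℕ // LinExt r1 p.1 ∧ p.2 ≤ n} ≃
      {q : (I : Finset (Fin n)) ×
            (Equiv.Perm (Fin I.card) × Equiv.Perm (Fin (Iᶜ).card)) //
        (∀ x y, y ∈ q.1 → r1 x y → x ∈ q.1) ∧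
        (∀ i j : Fin q.1.card,
          r1 (q.1.orderIsoOfFin rfl i) (q.1.orderIsoOfFin rfl j) →
            q.2.1.symm i < q.2.1.symm j) ∧
        (∀ i j : Fin (q.1ᶜ).card,
          r1 ((q.1ᶜ).orderIsoOfFin rfl i) ((q.1ᶜ).orderIsoOfFin rfl j) →
            q.2.2.symm i < q.2.2.symm j)},
      ∀ p,
        (b p).1.1 =
          (Finset.univ.filter fun j : Fin n => (j : ℕ) < p.1.2).image p.1.1 ∧
        (∀ (i : ℕ) (hi : i < (b p).1.1.card) (hn : i < n),
          (((b p).1.1.orderIsoOfFin rfl) ((b p).1.2.1 ⟨i, hi⟩) : Fin n) =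
            p.1.1 ⟨i, hn⟩) ∧
        (∀ (j : ℕ) (hj : j < ((b p).1.1ᶜ).card) (hn : p.1.2 + j < n),
          ((((b p).1.1ᶜ).orderIsoOfFin rfl) ((b p).1.2.2 ⟨j, hj⟩) : Fin n) =
            p.1.1 ⟨p.1.2 + j, hn⟩) := by
  refine ⟨decomposeEquiv r1, fun p => ⟨?_, fun i hi hn => ?_, fun j hj hn => ?_⟩⟩
  · exact rfl
  · exact orderIsoOfFin_stdPerm (hinj := leftWord_injective p.1.1.injective) _
  · refine (orderIsoOfFin_stdPerm (hinj := rightWord_injective p.1.1.injective) _).trans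
      (congrArg p.1.1 (Fin.ext (congrArg (· + j) (card_prefixSet p.2.2))))

/-- The bijection `(σ, u, v) ↦ (I, S, st(u), st(v))` between triples consisting
of a linear extension `σ` of `(E,<₁)` together with a factorization `σ = uv`
(encoded by the split point `p.2 ≤ n`), and quadruples `(I, S = Iᶜ, α, β)` with
`I` an inferior ideal of `(E,<₁)` and `α, β` linear extensions of `(I,<₁)` and
`(S,<₁)`.  Here `I` is the set of digits of `u`, `st(u) i` is the rank in `I`
of the `i`-th letter of `u`, and similarly for `v` and `Iᶜ`. -/
theorem linear_extension_decomposition_bijection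
    {n : ℕ} (r1 : Fin n → Fin n → Prop) (h1 : IsStrictOrder (Fin n) r1) :
    ∃ b :
      {p : Equiv.Perm (Fin n) × ℕ // LinExt r1 p.1 ∧ p.2 ≤ n} ≃
      {q : (I : Finset (Fin n)) ×
            (Equiv.Perm (Fin I.card) × Equiv.Perm (Fin (Iᶜ).card)) //
        (∀ x y, y ∈ q.1 → r1 x y → x ∈ q.1) ∧
        (∀ i j : Fin q.1.card,
          r1 (q.1.orderIsoOfFin rfl i) (q.1.orderIsoOfFin rfl j) →
            q.2.1.symm i < q.2.1.symm j) ∧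
        (∀ i j : Fin (q.1ᶜ).card,
          r1 ((q.1ᶜ).orderIsoOfFin rfl i) ((q.1ᶜ).orderIsoOfFin rfl j) →
            q.2.2.symm i < q.2.2.symm j)},
      ∀ p,
        (b p).1.1 =
          (Finset.univ.filter fun j : Fin n => (j : ℕ) < p.1.2).image p.1.1 ∧
        (∀ (i : ℕ) (hi : i < (b p).1.1.card) (hn : i < n),
          (((b p).1.1.orderIsoOfFin rfl) ((b p).1.2.1 ⟨i, hi⟩) : Fin n) =
            p.1.1 ⟨i, hn⟩) ∧
        (∀ (j : ℕ) (hj : j < ((b p).1.1ᶜ).card) (hn : p.1.2 + j < n),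
          ((((b p).1.1ᶜ).orderIsoOfFin rfl) ((b p).1.2.2 ⟨j, hj⟩) : Fin n) =
            p.1.1 ⟨p.1.2 + j, hn⟩) :=
  linear_extension_decomposition_bijection_general r1
end

section
/- The set of linear extensions of the composition ππ' of two special double posets π and π' equals the shifted shuffle product of the set of linear extensions of π with that of π'. Here, if |π| = n and |π'| = p, the shifted shuffle of permutations σ ∈ Sₙ and τ ∈ S_p is the set of shuffles of the word σ with the word τ̄ obtained from τ by adding n to each letter. -/
/-- First order of the composition `ππ'` of two special double posets realized
on `Fin (n+p)` (second orders being the natural orders). -/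
def fcompRel1 {n p : ℕ} (rE : Fin n → Fin n → Prop) (rF : Fin p → Fin p → Prop)
    (a b : Fin (n + p)) : Prop :=
  (∃ (ha : (a : ℕ) < n) (hb : (b : ℕ) < n), rE ⟨a, ha⟩ ⟨b, hb⟩) ∨
  (∃ (_ : n ≤ (a : ℕ)) (_ : n ≤ (b : ℕ)),
    rF ⟨(a : ℕ) - n, by have := a.isLt; omega⟩ ⟨(b : ℕ) - n, by have := b.isLt; omega⟩)

/-- `ρ` lies in the shifted shuffle of `σ ∈ Sₙ` and `τ ∈ S_p`: the word `ρ` is a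
shuffle of the word `σ` with the word `τ̄` obtained from `τ` by adding `n` to
each letter. -/
def IsShiftedShuffle {n p : ℕ} (σ : Equiv.Perm (Fin n)) (τ : Equiv.Perm (Fin p))
    (ρ : Equiv.Perm (Fin (n + p))) : Prop :=
  (∃ a : Fin n → Fin (n + p), StrictMono a ∧ ∀ i, (ρ (a i) : ℕ) = σ i) ∧
  (∃ b : Fin p → Fin (n + p), StrictMono b ∧ ∀ j, (ρ (b j) : ℕ) = n + τ j)

open Equiv Finset

theorem exists_strictMono_apply_eq_comp_perm {k m : ℕ} (ρ : Perm (Fin m)) (e : Fin k ↪ Fin m) :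
    ∃ a : Fin k → Fin m, StrictMono a ∧ ∃ σ : Perm (Fin k), ∀ i, ρ (a i) = e (σ i) := by
  set S := (univ.map e).map ρ.symm.toEmbedding
  have hS : S.card = k := by simp [S]
  set a := S.orderEmbOfFin hS
  have hmem : ∀ i, ∃ j, e j = ρ (a i) := fun i => by
    simpa [S, eq_symm_apply] using S.orderEmbOfFin_mem hS i
  choose f hf using hmem
  have hf_inj : Function.Injective f := fun i j hij =>
    a.injective (ρ.injective (by rw [← hf, ← hf, hij]))
  exact ⟨a, a.strictMono, .ofBijective f (Finite.injective_iff_bijective.mp hf_inj),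
    fun i => (hf i).symm⟩

theorem forall_symm_apply_lt_iff_linExt {k m : ℕ} {r : Fin k → Fin k → Prop} {ρ : Perm (Fin m)}
    {σ : Perm (Fin k)} {a e : Fin k → Fin m} (ha : StrictMono a) (h : ∀ i, ρ (a i) = e (σ i)) :
    (∀ x y, r x y → ρ.symm (e x) < ρ.symm (e y)) ↔ LinExt r σ := by
  have hsymm : ∀ x, ρ.symm (e x) = a (σ.symm x) := fun x => by
    rw [symm_apply_eq, h, apply_symm_apply]
  simp only [hsymm, ha.lt_iff_lt, LinExt]

section
variable {n p : ℕ} (rE : Fin n → Fin n → Prop) (rF : Fin p → Fin p → Prop)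

@[simp]
theorem fcompRel1_castAdd_castAdd (x y : Fin n) :
    fcompRel1 rE rF (Fin.castAdd p x) (Fin.castAdd p y) ↔ rE x y := by
  simp [fcompRel1]

@[simp]
theorem fcompRel1_natAdd_natAdd (x y : Fin p) :
    fcompRel1 rE rF (Fin.natAdd n x) (Fin.natAdd n y) ↔ rF x y := by
  simp [fcompRel1]

@[simp]
theorem not_fcompRel1_castAdd_natAdd (x : Fin n) (y : Fin p) :
    ¬ fcompRel1 rE rF (Fin.castAdd p x) (Fin.natAdd n y) := by
  simp [fcompRel1]

@[simp]
theorem not_fcompRel1_natAdd_castAdd (x : Fin n) (y : Fin p) :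
    ¬ fcompRel1 rE rF (Fin.natAdd n y) (Fin.castAdd p x) := by
  simp [fcompRel1]

theorem linExt_fcompRel1_iff (ρ : Perm (Fin (n + p))) :
    LinExt (fcompRel1 rE rF) ρ ↔
      (∀ x y, rE x y → ρ.symm (Fin.castAdd p x) < ρ.symm (Fin.castAdd p y)) ∧
        ∀ x y, rF x y → ρ.symm (Fin.natAdd n x) < ρ.symm (Fin.natAdd n y) := by
  refine ⟨fun h => ⟨fun x y hxy => h _ _ (by simpa), fun x y hxy => h _ _ (by simpa)⟩, ?_⟩
  rintro ⟨hlow, hhigh⟩ A B hAB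
  induction A using Fin.addCases <;> induction B using Fin.addCases <;>
    simp only [fcompRel1_castAdd_castAdd, fcompRel1_natAdd_natAdd, not_fcompRel1_castAdd_natAdd,
      not_fcompRel1_natAdd_castAdd] at hAB
  exacts [hlow _ _ hAB, hhigh _ _ hAB]

end

theorem isShiftedShuffle_iff {n p : ℕ} {σ : Perm (Fin n)} {τ : Perm (Fin p)}
    {ρ : Perm (Fin (n + p))} :
    IsShiftedShuffle σ τ ρ ↔
      (∃ a, StrictMono a ∧ ∀ i, ρ (a i) = Fin.castAdd p (σ i)) ∧
        ∃ b, StrictMono b ∧ ∀ j, ρ (b j) = Fin.natAdd n (τ j) := by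
  simp [IsShiftedShuffle, Fin.ext_iff]

theorem linear_extensions_of_composition_eq_shifted_shuffle_general
    {n p : ℕ} (rE : Fin n → Fin n → Prop) (rF : Fin p → Fin p → Prop) :
    ∀ ρ : Equiv.Perm (Fin (n + p)),
      LinExt (fcompRel1 rE rF) ρ ↔
        ∃ (σ : Equiv.Perm (Fin n)) (τ : Equiv.Perm (Fin p)),
          LinExt rE σ ∧ LinExt rF τ ∧ IsShiftedShuffle σ τ ρ := by
  intro ρ
  simp only [linExt_fcompRel1_iff, isShiftedShuffle_iff]
  constructor
  · rintro ⟨hlow, hhigh⟩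
    obtain ⟨a, ha, σ, hσ⟩ := exists_strictMono_apply_eq_comp_perm ρ (Fin.castAddEmb p)
    obtain ⟨b, hb, τ, hτ⟩ := exists_strictMono_apply_eq_comp_perm ρ (Fin.natAddEmb n)
    exact ⟨σ, τ, (forall_symm_apply_lt_iff_linExt ha hσ).1 hlow,
      (forall_symm_apply_lt_iff_linExt hb hτ).1 hhigh, ⟨a, ha, hσ⟩, ⟨b, hb, hτ⟩⟩
  · rintro ⟨σ, τ, hσ, hτ, ⟨a, ha, hσa⟩, ⟨b, hb, hτb⟩⟩
    exact ⟨(forall_symm_apply_lt_iff_linExt ha hσa).2 hσ,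
      (forall_symm_apply_lt_iff_linExt hb hτb).2 hτ⟩

/-- The set of linear extensions of the composition `ππ'` of two special double
posets is the shifted shuffle product of the sets of linear extensions of `π`
and of `π'`. -/
theorem linear_extensions_of_composition_eq_shifted_shuffle
    {n p : ℕ} (rE : Fin n → Fin n → Prop) (rF : Fin p → Fin p → Prop)
    (hE : IsStrictOrder (Fin n) rE) (hF : IsStrictOrder (Fin p) rF) :
    ∀ ρ : Equiv.Perm (Fin (n + p)),
      LinExt (fcompRel1 rE rF) ρ ↔
        ∃ (σ : Equiv.Perm (Fin n)) (τ : Equiv.Perm (Fin p)),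
          LinExt rE σ ∧ LinExt rF τ ∧ IsShiftedShuffle σ τ ρ :=
  linear_extensions_of_composition_eq_shifted_shuffle_general rE rF
end

section
/- Let π and π' be special double posets of the same cardinality n with labellings ω and ω'. The map φ ↦ ω∘φ⁻¹∘ω'⁻¹ is a bijection between pictures from π to π' and permutations σ ∈ Sₙ such that σ is a linear extension of π and σ⁻¹ is a linear extension of π'. -/
/-! The map `φ ↦ σ = ω ∘ φ⁻¹ ∘ ω'⁻¹` is conjugation by the labellings, hence a bijection from all
of `E ≃ E'` onto `Sₙ`. Since `σ⁻¹ ∘ ω = ω' ∘ φ` and `σ ∘ ω' = ω ∘ φ⁻¹`, the two linear-extension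
conditions on `σ` are literally the two picture conditions on `φ`. -/

/-- `σ` is a linear extension of the special double poset with first order `r1`
and labelling `ω` (the order isomorphism from the total second order to
`{1,...,n}`): `σ⁻¹∘ω` is increasing from `(E,<₁)` to `{1,...,n}`. -/
def SLinExt {E : Type} {n : ℕ} (r1 : E → E → Prop) (ω : E ≃ Fin n)
    (σ : Equiv.Perm (Fin n)) : Prop :=
  ∀ a b, r1 a b → σ.symm (ω a) < σ.symm (ω b)

/-- A picture between special double posets (with second orders given by the
labellings `ω`, `ω'`). -/
def SPicture {E E' : Type} {n : ℕ} (r1 : E → E → Prop) (ω : E ≃ Fin n)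
    (r1' : E' → E' → Prop) (ω' : E' ≃ Fin n) (φ : E ≃ E') : Prop :=
  (∀ a b, r1 a b → ω' (φ a) < ω' (φ b)) ∧
  (∀ a b, r1' a b → ω (φ.symm a) < ω (φ.symm b))

namespace SPicture

variable {E E' : Type} {n : ℕ} (ω : E ≃ Fin n) (ω' : E' ≃ Fin n)

def toPerm : (E ≃ E') ≃ Equiv.Perm (Fin n) :=
  (Equiv.symmEquiv E E').trans (ω'.equivCongr ω)

variable {ω ω'} (φ : E ≃ E')

lemma toPerm_apply : toPerm ω ω' φ = ω'.symm.trans (φ.symm.trans ω) := rfl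

lemma toPerm_symm_apply_labelling (a : E) : (toPerm ω ω' φ).symm (ω a) = ω' (φ a) := by
  simp [toPerm_apply]

lemma toPerm_apply_labelling (b : E') : toPerm ω ω' φ (ω' b) = ω (φ.symm b) := by
  simp [toPerm_apply]

lemma sLinExt_toPerm_iff (r1 : E → E → Prop) :
    SLinExt r1 ω (toPerm ω ω' φ) ↔ ∀ a b, r1 a b → ω' (φ a) < ω' (φ b) := by
  simp only [SLinExt, toPerm_symm_apply_labelling]

lemma sLinExt_toPerm_symm_iff (r1' : E' → E' → Prop) :
    SLinExt r1' ω' (toPerm ω ω' φ).symm ↔ ∀ a b, r1' a b → ω (φ.symm a) < ω (φ.symm b) := by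
  simp only [SLinExt, Equiv.symm_symm, toPerm_apply_labelling]

end SPicture

theorem pictures_are_pairs_of_linear_extensions_general
    {E E' : Type} {n : ℕ}
    (r1 : E → E → Prop) (ω : E ≃ Fin n)
    (r1' : E' → E' → Prop) (ω' : E' ≃ Fin n) :
    Set.BijOn
      (fun φ : E ≃ E' => (ω'.symm.trans (φ.symm.trans ω) : Equiv.Perm (Fin n)))
      {φ | SPicture r1 ω r1' ω' φ}
      {σ | SLinExt r1 ω σ ∧ SLinExt r1' ω' σ.symm} :=
  (SPicture.toPerm ω ω').bijOn fun φ =>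
    (SPicture.sLinExt_toPerm_iff φ r1).and (SPicture.sLinExt_toPerm_symm_iff φ r1')

/-- The map `φ ↦ ω∘φ⁻¹∘ω'⁻¹` is a bijection between pictures from `π` to `π'`
and permutations `σ` such that `σ` is a linear extension of `π` and `σ⁻¹` one
of `π'`. -/
theorem pictures_are_pairs_of_linear_extensions
    {E E' : Type} {n : ℕ} [Fintype E] [Fintype E']
    (r1 : E → E → Prop) (ω : E ≃ Fin n)
    (r1' : E' → E' → Prop) (ω' : E' ≃ Fin n)
    (h : IsStrictOrder E r1) (h' : IsStrictOrder E' r1') :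
    Set.BijOn
      (fun φ : E ≃ E' => (ω'.symm.trans (φ.symm.trans ω) : Equiv.Perm (Fin n)))
      {φ | SPicture r1 ω r1' ω' φ}
      {σ | SLinExt r1 ω σ ∧ SLinExt r1' ω' σ.symm} :=
  pictures_are_pairs_of_linear_extensions_general r1 ω r1' ω'
end

section
/- The number of pictures between two special double posets π and π' equals the number of permutations σ such that σ is a linear extension of π and σ⁻¹ is a linear extension of π'. Consequently, the map L sending a special double poset to the formal sum of its linear extensions is an isometry with respect to the Zelevinsky scalar product on double posets (counting pictures) and the Jöllenbeck scalar product on ℤS (with (σ,τ) = 1 if σ = τ⁻¹ and 0 otherwise). -/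
theorem sPicture_iff_sLinExt {E E' : Type} {n : ℕ} (r1 : E → E → Prop) (ω : E ≃ Fin n)
    (r1' : E' → E' → Prop) (ω' : E' ≃ Fin n) (φ : E ≃ E') :
    SPicture r1 ω r1' ω' φ ↔
      SLinExt r1 ω (Equiv.equivCongr ω ω' φ)⁻¹ ∧ SLinExt r1' ω' (Equiv.equivCongr ω ω' φ) := by
  simp [SPicture, SLinExt, Equiv.Perm.inv_def, Equiv.equivCongr]

def pictureEquivLinExt {E E' : Type} {n : ℕ} (r1 : E → E → Prop) (ω : E ≃ Fin n)
    (r1' : E' → E' → Prop) (ω' : E' ≃ Fin n) :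
    {φ : E ≃ E' // SPicture r1 ω r1' ω' φ} ≃
      {σ : Equiv.Perm (Fin n) // SLinExt r1 ω σ ∧ SLinExt r1' ω' σ⁻¹} :=
  ((Equiv.equivCongr ω ω').trans (Equiv.inv _)).subtypeEquiv fun φ => by
    rw [sPicture_iff_sLinExt, Equiv.trans_apply, Equiv.inv_apply, inv_inv]

def Equiv.subtypeInvEquivSubtypePair {α : Type*} [InvolutiveInv α] (p q : α → Prop) :
    {a : α // p a ∧ q a⁻¹} ≃ {x : α × α // p x.1 ∧ q x.2 ∧ x.1 = x.2⁻¹} where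
  toFun a := ⟨(a, a⁻¹), a.2.1, a.2.2, (inv_inv _).symm⟩
  invFun x := ⟨x.1.1, x.2.1, by simpa [x.2.2.2] using x.2.2.1⟩
  left_inv _ := rfl
  right_inv := by
    rintro ⟨⟨a, b⟩, -, -, rfl : a = b⁻¹⟩
    simp

theorem L_is_isometry_general
    {E E' : Type} {n : ℕ}
    (r1 : E → E → Prop) (ω : E ≃ Fin n)
    (r1' : E' → E' → Prop) (ω' : E' ≃ Fin n) :
    Nat.card {φ : E ≃ E' // SPicture r1 ω r1' ω' φ} =
      Nat.card {σ : Equiv.Perm (Fin n) //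
        SLinExt r1 ω σ ∧ SLinExt r1' ω' σ⁻¹} ∧
    Nat.card {φ : E ≃ E' // SPicture r1 ω r1' ω' φ} =
      Nat.card {q : Equiv.Perm (Fin n) × Equiv.Perm (Fin n) //
        SLinExt r1 ω q.1 ∧ SLinExt r1' ω' q.2 ∧ q.1 = q.2⁻¹} := by
  have pictures_eq_linExt := Nat.card_congr (pictureEquivLinExt r1 ω r1' ω')
  exact ⟨pictures_eq_linExt, pictures_eq_linExt.trans <| Nat.card_congr <|
    Equiv.subtypeInvEquivSubtypePair (SLinExt r1 ω) (SLinExt r1' ω')⟩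

/-- The number of pictures between two special double posets `π`, `π'` equals
the number of permutations `σ` that are linear extensions of `π` with `σ⁻¹` a
linear extension of `π'`; equivalently (Jöllenbeck pairing), it equals the
number of pairs `(σ, τ)` of linear extensions of `π` and `π'` with `σ = τ⁻¹`:
`L` is an isometry. -/
theorem L_is_isometry
    {E E' : Type} {n : ℕ} [Fintype E] [Fintype E']
    (r1 : E → E → Prop) (ω : E ≃ Fin n)
    (r1' : E' → E' → Prop) (ω' : E' ≃ Fin n)
    (h : IsStrictOrder E r1) (h' : IsStrictOrder E' r1') :
    Nat.card {φ : E ≃ E' // SPicture r1 ω r1' ω' φ} =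
      Nat.card {σ : Equiv.Perm (Fin n) //
        SLinExt r1 ω σ ∧ SLinExt r1' ω' σ⁻¹} ∧
    Nat.card {φ : E ≃ E' // SPicture r1 ω r1' ω' φ} =
      Nat.card {q : Equiv.Perm (Fin n) × Equiv.Perm (Fin n) //
        SLinExt r1 ω q.1 ∧ SLinExt r1' ω' q.2 ∧ q.1 = q.2⁻¹} :=
  L_is_isometry_general r1 ω r1' ω'
end

section
/- Let π be a special double poset. A word w = a₁...aₙ over a totally ordered alphabet fits into π if and only if its standard permutation st(w) fits into π. -/
/-!
For positions `i ≠ j`, the two conditions a π-partition imposes on the pair say exactly that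
`(w i, i) < (w j, j)` lexicographically. The standard permutation is the word whose letters are
compared in precisely this order, so both words satisfy the same conditions.
-/

def Fits {E : Type} {n : ℕ} {A : Type} [LinearOrder A]
    (r1 : E → E → Prop) (ω : E ≃ Fin n) (w : Fin n → A) : Prop :=
  (∀ e e', r1 e e' → w (ω e) ≤ w (ω e')) ∧
  (∀ e e', r1 e e' → ¬ ω e < ω e' → w (ω e) < w (ω e'))

/-- `s` is the standard permutation `st(w)` of the word `w`: positions are
numbered `1,...,n` processing occurrences of the smallest letter left to right,
then the next smallest, and so on; equivalently the ranks `s i` are ordered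
lexicographically by (letter, position). -/
def IsStd {n : ℕ} {A : Type} [LinearOrder A] (w : Fin n → A)
    (s : Equiv.Perm (Fin n)) : Prop :=
  ∀ i j, s i < s j ↔ (w i < w j ∨ (w i = w j ∧ i < j))

section

variable {ι A : Type} [LinearOrder ι] [LinearOrder A]

theorem le_and_lt_of_not_lt_iff_lex (w : ι → A) {i j : ι} (hij : i ≠ j) :
    (w i ≤ w j ∧ (¬ i < j → w i < w j)) ↔ (w i < w j ∨ w i = w j ∧ i < j) := by
  rcases lt_or_gt_of_ne hij with hlt | hgt
  · simp [hlt, le_iff_lt_or_eq]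
  · simp [hgt.not_gt, and_iff_right_of_imp le_of_lt]

theorem lex_iff_of_injective {w : ι → A} (hw : Function.Injective w) {i j : ι} :
    (w i < w j ∨ w i = w j ∧ i < j) ↔ w i < w j :=
  or_iff_left fun ⟨heq, hlt⟩ => hlt.ne (hw heq)

theorem fits_iff_forall_lex {E : Type} {n : ℕ} {r1 : E → E → Prop} (hr : Std.Irrefl r1)
    (ω : E ≃ Fin n) (w : Fin n → A) :
    Fits r1 ω w ↔
      ∀ e e', r1 e e' → w (ω e) < w (ω e') ∨ w (ω e) = w (ω e') ∧ ω e < ω e' := by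
  have hne : ∀ e e', r1 e e' → ω e ≠ ω e' := fun e e' he heq =>
    hr.irrefl e' (ω.injective heq ▸ he)
  simp only [Fits, ← forall_and]
  exact forall₂_congr fun e e' => forall_congr' fun he =>
    le_and_lt_of_not_lt_iff_lex w (hne e e' he)

end

theorem fits_iff_std_fits_general
    {E : Type} {n : ℕ} {A : Type} [LinearOrder A]
    (r1 : E → E → Prop) (ω : E ≃ Fin n) (h : IsStrictOrder E r1)
    (w : Fin n → A) (s : Equiv.Perm (Fin n)) (hs : IsStd w s) :
    Fits r1 ω w ↔ Fits r1 ω (fun i => s i) := by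
  have hr : Std.Irrefl r1 := h.toIrrefl
  rw [fits_iff_forall_lex hr, fits_iff_forall_lex hr]
  refine forall₂_congr fun e e' => imp_congr_right fun _ => ?_
  rw [lex_iff_of_injective s.injective, hs]

/-- A word fits into a special double poset iff its standard permutation
(viewed as a word) does. -/
theorem fits_iff_std_fits
    {E : Type} {n : ℕ} {A : Type} [LinearOrder A] [Fintype E]
    (r1 : E → E → Prop) (ω : E ≃ Fin n) (h : IsStrictOrder E r1)
    (w : Fin n → A) (s : Equiv.Perm (Fin n)) (hs : IsStd w s) :
    Fits r1 ω w ↔ Fits r1 ω (fun i => s i) :=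
  fits_iff_std_fits_general r1 ω h w s hs
end

section
/- Let w be a word on the positive integers of weight equal to the partition ν = (ν₁ > ... > ν_k > 0) of n, let u be the complement of w, let w₀ = n (n−1) ... 1 be the longest element of Sₙ, and let γ be the longest element of the Young subgroup S_{ν₁} × ... × S_{ν_k}. Then st(u) = w₀ ∘ γ ∘ st(w). -/
/-!
Standardization numbers the positions carrying the letter `c` consecutively, so `st(w)` maps them
onto the block `[B c, B (c + 1))` of `Fin n`, where `B c` counts the letters smaller than `c`.
Complementing the letters reverses the order of the blocks and leaves the order inside each block
unchanged, which is what `w₀ ∘ γ` does: `w₀` reverses everything and `γ` reverses each block back.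
Since a permutation is the standardization of `u` as soon as it orders positions as `st(u)` does,
it suffices to compare `w₀ ∘ γ ∘ st(w)` at two positions, first by their blocks and then inside one.
-/

open Finset

theorem Fin.val_perm_apply_eq_card {n : ℕ} (s : Equiv.Perm (Fin n)) (i : Fin n) :
    (s i : ℕ) = #{m | s m < s i} := by
  rw [← Fin.card_Iio]
  exact (card_equiv s fun m => by simp).symm

namespace IsStd

variable {n : ℕ} {A : Type} [LinearOrder A] {w : Fin n → A} {s : Equiv.Perm (Fin n)}

theorem unique {t : Equiv.Perm (Fin n)} (hs : IsStd w s) (ht : IsStd w t) : s = t := by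
  have hmono : StrictMono (t ∘ s.symm) := fun a b hab => by
    have := (hs (s.symm a) (s.symm b)).mp (by simpa using hab)
    exact (ht _ _).mpr this
  have hid : t ∘ s.symm = id :=
    (hmono.range_inj strictMono_id).mp (by simp [Set.range_comp])
  ext i : 1
  simpa using (congrFun hid (s i)).symm

theorem lt_iff_of_eq (hs : IsStd w s) {i j : Fin n} (h : w i = w j) : s i < s j ↔ i < j := by
  simp [hs i j, h]

theorem card_lt_le (hs : IsStd w s) (i : Fin n) : #{m | w m < w i} ≤ s i := by
  rw [Fin.val_perm_apply_eq_card s i]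
  exact card_le_card fun m hm => by simpa [hs m i] using Or.inl (by simpa using hm)

theorem lt_card_le (hs : IsStd w s) (i : Fin n) : (s i : ℕ) < #{m | w m ≤ w i} := by
  rw [Fin.val_perm_apply_eq_card s i]
  refine card_lt_card ⟨fun m hm => ?_, fun hsub => by simpa using hsub (by simp : i ∈ _)⟩
  simp only [mem_filter, mem_univ, true_and, hs m i] at hm ⊢
  rcases hm with hm | hm
  exacts [hm.le, hm.1.le]

end IsStd

theorem card_filter_val_lt_eq_sum {n k : ℕ} (w : Fin n → Fin k) (m : ℕ) :
    #{x | (w x : ℕ) < m} = ∑ i ∈ univ.filter (fun i : Fin k => (i : ℕ) < m), #{x | w x = i} := by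
  rw [card_eq_sum_card_fiberwise (f := w) (t := univ.filter fun i : Fin k => (i : ℕ) < m)]
  · refine sum_congr rfl fun i hi => congrArg card ?_
    ext x
    simp only [mem_filter, mem_univ, true_and] at hi ⊢
    exact ⟨And.right, fun h => ⟨h ▸ hi, h⟩⟩
  · intro x hx
    simpa using hx

/-- Reversing each block `[B c, B (c + 1))` of `ℕ` keeps the blocks in order. -/
theorem blockRev_lt_blockRev_iff {B : ℕ → ℕ} (hB : Monotone B) {a b c d : ℕ}
    (ha : B c ≤ a ∧ a < B (c + 1)) (hb : B d ≤ b ∧ b < B (d + 1)) :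
    B c + B (c + 1) - 1 - a < B d + B (d + 1) - 1 - b ↔ c < d ∨ (c = d ∧ b < a) := by
  rcases lt_trichotomy c d with hcd | rfl | hdc
  · have : B (c + 1) ≤ B d := hB hcd
    omega
  · omega
  · have : B (d + 1) ≤ B c := hB hdc
    omega

/-- Letters `1, …, k` are encoded as `Fin k`, so the complement is `Fin.rev` and `w₀` is
`Fin.revPerm`; `γ` reverses each block `[B j, B (j + 1))`, where `B j = ν₁ + ⋯ + ν_j`. -/
theorem std_of_complement_general
    {n k : ℕ} (ν : Fin k → ℕ)
    (w : Fin n → Fin k)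
    (hweight : ∀ j, (Finset.univ.filter fun i => w i = j).card = ν j)
    (B : ℕ → ℕ)
    (hB : ∀ m, B m = ∑ i ∈ Finset.univ.filter (fun i : Fin k => (i : ℕ) < m), ν i)
    (γ : Equiv.Perm (Fin n))
    (hγ : ∀ (m : Fin n) (j : ℕ), j < k → B j ≤ (m : ℕ) → (m : ℕ) < B (j + 1) →
      (γ m : ℕ) = B j + B (j + 1) - 1 - (m : ℕ))
    (sw su : Equiv.Perm (Fin n))
    (hsw : IsStd w sw) (hsu : IsStd (fun i => (w i).rev) su) :
    su = sw.trans (γ.trans Fin.revPerm) := by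
  have hB_card : ∀ m, B m = #{x | (w x : ℕ) < m} := fun m => by
    simp only [hB, card_filter_val_lt_eq_sum, hweight]
  have hB_mono : Monotone B := fun a b hab => by
    simp only [hB_card]
    exact card_le_card fun x => by simp only [mem_filter, mem_univ, true_and]; omega
  have hblock : ∀ i, B (w i) ≤ sw i ∧ (sw i : ℕ) < B (w i + 1) := fun i => by
    simp only [hB_card, ← Fin.lt_def, Nat.lt_succ_iff, ← Fin.le_def]
    exact ⟨hsw.card_lt_le i, hsw.lt_card_le i⟩
  have hγsw : ∀ i, (γ (sw i) : ℕ) = B (w i) + B (w i + 1) - 1 - sw i := fun i =>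
    hγ _ _ (w i).isLt (hblock i).1 (hblock i).2
  refine hsu.unique fun i j => ?_
  simp only [Equiv.trans_apply, Fin.revPerm_apply, Fin.rev_lt_rev, Fin.rev_inj,
    Fin.lt_def (a := γ _), hγsw, blockRev_lt_blockRev_iff hB_mono (hblock j) (hblock i), ← Fin.lt_def, Fin.val_inj]
  rw [or_congr_right (and_congr_right fun h => hsw.lt_iff_of_eq h.symm), eq_comm]

/-- Let `w` be a word with letters `1,...,k` (encoded as `Fin k`) of weight the
strict partition `ν = (ν₁ > ... > ν_k > 0)` of `n`, `u` its complement
(letter `j ↦ k+1-j`, i.e. `Fin.rev`), `w₀` the longest element of `Sₙ`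
(`Fin.revPerm`) and `γ` the longest element of the Young subgroup
`S_{ν₁} × ... × S_{ν_k}` (reversing each consecutive block `[B j, B (j+1))`,
where `B j = ν₁ + ... + ν_j`).  Then `st(u) = w₀ ∘ γ ∘ st(w)`. -/
theorem std_of_complement
    {n k : ℕ} (ν : Fin k → ℕ)
    (hanti : ∀ i j : Fin k, i < j → ν j < ν i) (hpos : ∀ i, 0 < ν i)
    (hsum : ∑ i, ν i = n)
    (w : Fin n → Fin k)
    (hweight : ∀ j, (Finset.univ.filter fun i => w i = j).card = ν j)
    (B : ℕ → ℕ)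
    (hB : ∀ m, B m = ∑ i ∈ Finset.univ.filter (fun i : Fin k => (i : ℕ) < m), ν i)
    (γ : Equiv.Perm (Fin n))
    (hγ : ∀ (m : Fin n) (j : ℕ), j < k → B j ≤ (m : ℕ) → (m : ℕ) < B (j + 1) →
      (γ m : ℕ) = B j + B (j + 1) - 1 - (m : ℕ))
    (sw su : Equiv.Perm (Fin n))
    (hsw : IsStd w sw) (hsu : IsStd (fun i => (w i).rev) su) :
    su = sw.trans (γ.trans Fin.revPerm) :=
  std_of_complement_general ν w hweight B hB γ hγ sw su hsw hsu
end

section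
/- Let π be a special double poset of cardinality n and ν a partition of n. The number of pictures from π to the double poset π_ν equals the number of lattice permutations of weight ν whose complements fit into π (an extension of the Littlewood–Richardson rule). -/
/-- First order of the double poset `π_ν`: the componentwise (natural) order of
`ℕ × ℕ` on the cells `(j, c)` (`j` the row, `c` the column) of the Ferrers
diagram of `ν`. -/
def cellRel1 {k : ℕ} (ν : Fin k → ℕ) (c c' : Σ j : Fin k, Fin (ν j)) : Prop :=
  ((c.1 : ℕ) ≤ (c'.1 : ℕ) ∧ (c.2 : ℕ) ≤ (c'.2 : ℕ)) ∧ c ≠ c'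

/-- Second order of `π_ν`: `(x,y) <₂ (x',y')` iff `y > y'`, or `y = y'` and
`x < x'` (reading-word order). -/
def cellRel2 {k : ℕ} (ν : Fin k → ℕ) (c c' : Σ j : Fin k, Fin (ν j)) : Prop :=
  (c'.1 : ℕ) < (c.1 : ℕ) ∨ (c.1 = c'.1 ∧ (c.2 : ℕ) < (c'.2 : ℕ))

/-!
Through the labelling `ω`, a picture `φ : π → π_ν` is the same as a bijection
`ψ : Fin n ≃ cells of ν` whose inverse increases along the componentwise order, i.e. a standard
Young tableau of shape `ν`. Reading off the row of the cell labelled `0, 1, …, n - 1` gives its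
Yamanouchi word, a lattice word of weight `ν`; conversely a lattice word of weight `ν` puts its
`i`-th letter `a` into row `a`, at the column counting the earlier `a`'s, and the lattice property
is exactly what makes this filling standard. Since in a standard tableau the labels increase along
each row, the reading order `<₂` of two cells is "larger row index first, then smaller label", which
turns the remaining picture condition into the statement that the complemented word fits into `π`.
-/

open Finset

namespace LittlewoodRichardson

variable {n k : ℕ}

section PrefixCount

variable {α : Type*} [DecidableEq α] (w : Fin n → α)

def prefixCount (m : ℕ) (a : α) : ℕ :=
  #{i : Fin n | (i : ℕ) < m ∧ w i = a}

lemma prefixCount_mono (a : α) : Monotone (prefixCount w · a) := fun _ _ hm =>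
  card_le_card fun _ => by
    simp only [mem_filter, mem_univ, true_and]
    exact fun ⟨h, hw⟩ => ⟨by omega, hw⟩

lemma prefixCount_succ_self (i : Fin n) :
    prefixCount w (i + 1) (w i) = prefixCount w i (w i) + 1 := by
  have : univ.filter (fun i' : Fin n => (i' : ℕ) < i + 1 ∧ w i' = w i) =
      insert i (univ.filter fun i' : Fin n => (i' : ℕ) < i ∧ w i' = w i) := by
    ext i'
    simp only [mem_filter, mem_univ, true_and, mem_insert, Fin.ext_iff]
    grind
  rw [prefixCount, this, card_insert_of_notMem (by simp)]
  rfl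

lemma prefixCount_self_lt {i : Fin n} {m : ℕ} (h : (i : ℕ) < m) :
    prefixCount w i (w i) < prefixCount w m (w i) :=
  calc prefixCount w i (w i) < prefixCount w (i + 1) (w i) := by
        rw [prefixCount_succ_self]; omega
    _ ≤ prefixCount w m (w i) := prefixCount_mono w _ h

lemma prefixCount_self_lt_iff {i i' : Fin n} :
    prefixCount w i (w i) < prefixCount w i' (w i) ↔ i < i' := by
  refine ⟨fun h => ?_, prefixCount_self_lt w⟩
  by_contra hle
  exact (prefixCount_mono w _ (Fin.not_lt.mp hle)).not_gt h

lemma prefixCount_length (a : α) : prefixCount w n a = #{i | w i = a} := by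
  simp [prefixCount]

end PrefixCount

def IsLatticeWord (w : Fin n → Fin k) : Prop :=
  ∀ (m : ℕ) (j j' : Fin k), (j' : ℕ) = j + 1 → prefixCount w m j' ≤ prefixCount w m j

def HasWeight (w : Fin n → Fin k) (ν : Fin k → ℕ) : Prop :=
  ∀ j, #{i | w i = j} = ν j

lemma IsLatticeWord.prefixCount_anti {w : Fin n → Fin k} (hw : IsLatticeWord w) (m : ℕ)
    {j j' : Fin k} (hj : j ≤ j') : prefixCount w m j' ≤ prefixCount w m j := by
  obtain ⟨d, hd⟩ := j'
  replace hj : (j : ℕ) ≤ d := hj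
  induction d, hj using Nat.le_induction with
  | base => exact le_rfl
  | succ d _ ih => exact (hw m ⟨d, by omega⟩ _ rfl).trans (ih (by omega))

abbrev Cells (ν : Fin k → ℕ) := Σ j : Fin k, Fin (ν j)

lemma card_filter_sigma_fst {ι : Type*} [Fintype ι] [DecidableEq ι] {β : ι → Type*}
    [∀ i, Fintype (β i)] (p : (Σ i, β i) → Prop) [DecidablePred p] (i : ι) :
    #{c : Σ i, β i | c.1 = i ∧ p c} = #{x : β i | p ⟨i, x⟩} := by
  rw [← card_map (Function.Embedding.sigmaMk i)]
  congr 1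
  ext ⟨i', x⟩
  simp only [mem_filter, mem_univ, true_and, mem_map, Function.Embedding.sigmaMk_apply]
  grind

variable {ν : Fin k → ℕ}

section StandardTableaux

def IsStandard (ψ : Fin n ≃ Cells ν) : Prop :=
  ∀ c c', cellRel1 ν c c' → ψ.symm c < ψ.symm c'

def rowWord (ψ : Fin n ≃ Cells ν) (i : Fin n) : Fin k := (ψ i).1

variable {ψ : Fin n ≃ Cells ν}

lemma prefixCount_rowWord (ψ : Fin n ≃ Cells ν) (m : ℕ) (j : Fin k) :
    prefixCount (rowWord ψ) m j = #{x : Fin (ν j) | (ψ.symm ⟨j, x⟩ : ℕ) < m} := by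
  rw [prefixCount, ← card_filter_sigma_fst fun c => (ψ.symm c : ℕ) < m]
  exact card_equiv ψ fun i => by
    simp only [mem_filter, mem_univ, true_and]
    simp [rowWord, and_comm]

lemma hasWeight_rowWord (ψ : Fin n ≃ Cells ν) : HasWeight (rowWord ψ) ν := fun j => by
  simp [← prefixCount_length, prefixCount_rowWord]

lemma IsStandard.strictMono_row (hψ : IsStandard ψ) (j : Fin k) :
    StrictMono fun x : Fin (ν j) => ψ.symm ⟨j, x⟩ := fun _ _ h =>
  hψ _ _ ⟨⟨le_rfl, h.le⟩, by simpa using h.ne⟩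

lemma IsStandard.prefixCount_rowWord_symm (hψ : IsStandard ψ) (j : Fin k) (x : Fin (ν j)) :
    prefixCount (rowWord ψ) (ψ.symm ⟨j, x⟩) j = x := by
  simp_rw [prefixCount_rowWord, ← Fin.lt_def, (hψ.strictMono_row j).lt_iff_lt, filter_gt_eq_Iio,
    Fin.card_Iio]

lemma IsStandard.val_snd_eq (hψ : IsStandard ψ) (i : Fin n) :
    ((ψ i).2 : ℕ) = prefixCount (rowWord ψ) i (rowWord ψ i) := by
  obtain ⟨⟨j, x⟩, rfl⟩ := ψ.symm.surjective i
  rw [show rowWord ψ (ψ.symm ⟨j, x⟩) = j by simp [rowWord], hψ.prefixCount_rowWord_symm,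
    Equiv.apply_symm_apply]

lemma IsStandard.isLatticeWord (hψ : IsStandard ψ) (hν : Antitone ν) :
    IsLatticeWord (rowWord ψ) := by
  intro m j j' hj
  have hjj : j ≤ j' := Fin.le_def.2 (by omega)
  rw [prefixCount_rowWord, prefixCount_rowWord]
  refine card_le_card_of_injOn (Fin.castLE (hν hjj)) (fun x hx => ?_)
    (Fin.castLE_injective _).injOn
  simp only [coe_filter, mem_univ, true_and, Set.mem_ofPred_eq] at hx ⊢
  refine lt_trans (Fin.lt_def.1 (hψ ⟨j, Fin.castLE _ x⟩ ⟨j', x⟩ ⟨⟨hjj, le_rfl⟩, fun h => ?_⟩)) hx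
  have : (j : ℕ) = j' := congrArg (fun c : Cells ν => (c.1 : ℕ)) h
  omega

lemma IsStandard.cellRel2_iff (hψ : IsStandard ψ) (i i' : Fin n) :
    cellRel2 ν (ψ i) (ψ i') ↔
      rowWord ψ i' < rowWord ψ i ∨ (rowWord ψ i = rowWord ψ i' ∧ i < i') := by
  refine or_congr Iff.rfl (and_congr_right fun h => ?_)
  rw [hψ.val_snd_eq, hψ.val_snd_eq, ← show rowWord ψ i = rowWord ψ i' from h]
  exact prefixCount_self_lt_iff _

end StandardTableaux

section LatticeWords

variable {w : Fin n → Fin k} (hw : HasWeight w ν)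
include hw

lemma HasWeight.prefixCount_lt (i : Fin n) : prefixCount w i (w i) < ν (w i) := by
  rw [← hw (w i), ← prefixCount_length]
  exact prefixCount_self_lt w i.isLt

lemma HasWeight.card_cells : Fintype.card (Cells ν) = n := by
  simp_rw [Fintype.card_sigma, Fintype.card_fin, ← hw _]
  rw [← card_eq_sum_card_fiberwise (by simp), card_univ, Fintype.card_fin]

def cellOf (i : Fin n) : Cells ν := ⟨w i, ⟨prefixCount w i (w i), hw.prefixCount_lt i⟩⟩

lemma cellOf_injective : Function.Injective (cellOf hw) := by
  intro i i' h
  have hrow : w i = w i' := congrArg Sigma.fst h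
  have hcol : prefixCount w i (w i) = prefixCount w i' (w i') :=
    congrArg (fun c : Cells ν => (c.2 : ℕ)) h
  by_contra hne
  rcases Ne.lt_or_gt hne with hlt | hgt
  · exact (prefixCount_self_lt w hlt).ne (hrow ▸ hcol)
  · exact (prefixCount_self_lt w hgt).ne (hrow ▸ hcol.symm)

noncomputable def tableauOf : Fin n ≃ Cells ν :=
  .ofBijective (cellOf hw) <| (Fintype.bijective_iff_injective_and_card _).2
    ⟨cellOf_injective hw, by rw [Fintype.card_fin, hw.card_cells]⟩

lemma IsLatticeWord.isStandard_tableauOf (hlat : IsLatticeWord w) : IsStandard (tableauOf hw) := by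
  intro c c' hcc
  obtain ⟨i, rfl⟩ := (tableauOf hw).surjective c
  obtain ⟨i', rfl⟩ := (tableauOf hw).surjective c'
  obtain ⟨⟨hrow, hcol⟩, hne⟩ := hcc
  change (w i : ℕ) ≤ w i' at hrow
  change prefixCount w i (w i) ≤ prefixCount w i' (w i') at hcol
  simp only [Equiv.symm_apply_apply]
  by_contra hle
  have hlt : i' < i := lt_of_le_of_ne (not_lt.1 hle) fun h => hne (h ▸ rfl)
  have := calc prefixCount w i' (w i') + 1 = prefixCount w (i' + 1) (w i') :=
        (prefixCount_succ_self w i').symm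
    _ ≤ prefixCount w (i' + 1) (w i) := hlat.prefixCount_anti _ hrow
    _ ≤ prefixCount w i (w i) := prefixCount_mono w _ hlt
  omega

end LatticeWords

lemma IsStandard.tableauOf_rowWord {ψ : Fin n ≃ Cells ν} (hψ : IsStandard ψ) :
    tableauOf (hasWeight_rowWord ψ) = ψ :=
  Equiv.ext fun i => Sigma.ext rfl (heq_of_eq (Fin.ext (hψ.val_snd_eq i).symm))

noncomputable def standardEquivLatticeWord (hν : Antitone ν) :
    {ψ : Fin n ≃ Cells ν // IsStandard ψ} ≃
      {w : Fin n → Fin k // IsLatticeWord w ∧ HasWeight w ν} where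
  toFun ψ := ⟨rowWord ψ.1, ψ.2.isLatticeWord hν, hasWeight_rowWord ψ.1⟩
  invFun w := ⟨tableauOf w.2.2, w.2.1.isStandard_tableauOf w.2.2⟩
  left_inv ψ := Subtype.ext ψ.2.tableauOf_rowWord
  right_inv _ := rfl

lemma fits_rev_iff {E : Type} (r1 : E → E → Prop) (ω : E ≃ Fin n) (w : Fin n → Fin k) :
    Fits r1 ω (fun i => (w i).rev) ↔
      ∀ e e', r1 e e' → w (ω e') < w (ω e) ∨ (w (ω e) = w (ω e') ∧ ω e < ω e') := by
  simp only [Fits, Fin.rev_le_rev, Fin.rev_lt_rev, ← forall_and]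
  refine forall₃_congr fun e e' _ => ?_
  grind

def pictureEquivStandard {E : Type} (r1 : E → E → Prop) (ω : E ≃ Fin n) (ν : Fin k → ℕ) :
    {φ : E ≃ Cells ν // (∀ a b, r1 a b → cellRel2 ν (φ a) (φ b)) ∧
        (∀ c c', cellRel1 ν c c' → ω (φ.symm c) < ω (φ.symm c'))} ≃
      {ψ : {ψ : Fin n ≃ Cells ν // IsStandard ψ} //
        ∀ a b, r1 a b → cellRel2 ν (ψ.1 (ω a)) (ψ.1 (ω b))} :=
  ((ω.equivCongr (Equiv.refl _)).subtypeEquiv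
      (q := fun ψ => IsStandard ψ ∧ ∀ a b, r1 a b → cellRel2 ν (ψ (ω a)) (ψ (ω b)))
      fun _ => and_comm.trans (and_congr Iff.rfl (by simp [Equiv.equivCongr_apply_apply]))).trans
    (Equiv.subtypeSubtypeEquivSubtypeInter _ _).symm

end LittlewoodRichardson

open LittlewoodRichardson

theorem littlewood_richardson_for_special_double_posets_general
    {E : Type} {n k : ℕ}
    (r1 : E → E → Prop) (ω : E ≃ Fin n)
    (ν : Fin k → ℕ)
    (hanti : ∀ i j : Fin k, i ≤ j → ν j ≤ ν i) :
    Nat.card {φ : E ≃ Σ j : Fin k, Fin (ν j) //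
        (∀ a b, r1 a b → cellRel2 ν (φ a) (φ b)) ∧
        (∀ c c', cellRel1 ν c c' → ω (φ.symm c) < ω (φ.symm c'))} =
    Nat.card {w : Fin n → Fin k //
        (∀ (m : ℕ) (j j' : Fin k), (j' : ℕ) = (j : ℕ) + 1 →
          (Finset.univ.filter fun i : Fin n => (i : ℕ) < m ∧ w i = j').card ≤
            (Finset.univ.filter fun i : Fin n => (i : ℕ) < m ∧ w i = j).card) ∧
        (∀ j, (Finset.univ.filter fun i => w i = j).card = ν j) ∧
        Fits r1 ω (fun i => (w i).rev)} := by
  calc _ = Nat.card {ψ : {ψ : Fin n ≃ Cells ν // IsStandard ψ} //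
          ∀ a b, r1 a b → cellRel2 ν (ψ.1 (ω a)) (ψ.1 (ω b))} :=
        Nat.card_congr (pictureEquivStandard r1 ω ν)
    _ = Nat.card {w : {w : Fin n → Fin k // IsLatticeWord w ∧ HasWeight w ν} //
          Fits r1 ω fun i => (w.1 i).rev} :=
        Nat.card_congr <| (standardEquivLatticeWord hanti).subtypeEquiv fun ψ => by
          rw [fits_rev_iff]
          exact forall₃_congr fun a b _ => ψ.2.cellRel2_iff (ω a) (ω b)
    _ = _ := Nat.card_congr <| (Equiv.subtypeSubtypeEquivSubtypeInter _
          fun w : Fin n → Fin k => Fits r1 ω fun i => (w i).rev).trans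
        (Equiv.subtypeEquivRight fun _ => and_assoc)

/-- Extended Littlewood–Richardson rule: the number of pictures from a special
double poset `π` (of cardinality `n`, with first order `r1` and labelling `ω`)
to `π_ν` equals the number of lattice permutations of weight `ν` whose
complements fit into `π`. -/
theorem littlewood_richardson_for_special_double_posets
    {E : Type} [Fintype E] {n k : ℕ}
    (r1 : E → E → Prop) (ω : E ≃ Fin n) (h1 : IsStrictOrder E r1)
    (ν : Fin k → ℕ)
    (hanti : ∀ i j : Fin k, i ≤ j → ν j ≤ ν i) (hpos : ∀ i, 0 < ν i)
    (hsum : ∑ i, ν i = n) :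
    Nat.card {φ : E ≃ Σ j : Fin k, Fin (ν j) //
        (∀ a b, r1 a b → cellRel2 ν (φ a) (φ b)) ∧
        (∀ c c', cellRel1 ν c c' → ω (φ.symm c) < ω (φ.symm c'))} =
    Nat.card {w : Fin n → Fin k //
        (∀ (m : ℕ) (j j' : Fin k), (j' : ℕ) = (j : ℕ) + 1 →
          (Finset.univ.filter fun i : Fin n => (i : ℕ) < m ∧ w i = j').card ≤
            (Finset.univ.filter fun i : Fin n => (i : ℕ) < m ∧ w i = j).card) ∧
        (∀ j, (Finset.univ.filter fun i => w i = j).card = ν j) ∧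
        Fits r1 ω (fun i => (w i).rev)} :=
  littlewood_richardson_for_special_double_posets_general r1 ω ν hanti
end
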